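/- Lamport's bakery algorithm for two processes (Example 3) satisfies the mutual exclusion property: for every event stream es and every position n, the trace σ of es under step3 from initial state (T,T,0,0) never has both process components equal to U, i.e., it is not the case that the first component of σ n is U and the second component of σ n is U. -/

import Mathlib

inductive ProcState : Type where
  | T | W | U
deriving DecidableEq

inductive Event : Type where
  | request1 | request2 | take1 | take2 | release1 | release2
deriving DecidableEq

/-- The trace of an event stream under a transition function from an initial state. -/
def trace {S : Type} (step : Event → S → S) (s0 : S) (es : ℕ → Event) : ℕ → S
  | 0 => s0
  | n + 1 => step (es n) (trace step s0 es n)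

/-- An event stream is fair if every event occurs infinitely often. -/
def Fair (es : ℕ → Event) : Prop := ∀ (e : Event) (n : ℕ), ∃ m, n ≤ m ∧ es m = e

/-- Transition function of Example 3 (Lamport's bakery algorithm for two processes).
The state is `(s1, s2, t1, t2)` where `t1`, `t2` are the ticket numbers. -/
def step3 : Event → ProcState × ProcState × ℕ × ℕ → ProcState × ProcState × ℕ × ℕ
  | .request1, (s1, s2, t1, t2) =>
      if s1 = ProcState.T then (.W, s2, t2 + 1, t2) else (s1, s2, t1, t2)
  | .request2, (s1, s2, t1, t2) =>
      if s2 = ProcState.T then (s1, .W, t1, t1 + 1) else (s1, s2, t1, t2)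
  | .take1, (s1, s2, t1, t2) =>
      if s1 = ProcState.W ∧ (s2 = ProcState.T ∨ t1 < t2) then (.U, s2, t1, t2)
      else (s1, s2, t1, t2)
  | .take2, (s1, s2, t1, t2) =>
      if s2 = ProcState.W ∧ (s1 = ProcState.T ∨ t2 < t1) then (s1, .U, t1, t2)
      else (s1, s2, t1, t2)
  | .release1, (s1, s2, t1, t2) =>
      if s1 = ProcState.U then (.T, s2, 0, t2) else (s1, s2, t1, t2)
  | .release2, (s1, s2, t1, t2) =>
      if s2 = ProcState.U then (s1, .T, t1, 0) else (s1, s2, t1, t2)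

/-!
A process in its critical section faces a competitor that is either thinking or holds a larger
ticket. This is preserved by every transition: a request draws a ticket larger than the other
one, and a process may only enter when that condition holds, while the other one, if already
inside, would hold the smaller ticket. Both processes inside would force `t1 < t2 < t1`.
-/

theorem trace_induction {S : Type} {step : Event → S → S} {s0 : S} (P : S → Prop)
    (h0 : P s0) (hstep : ∀ e s, P s → P (step e s)) (es : ℕ → Event) :
    ∀ n, P (trace step s0 es n)
  | 0 => h0
  | n + 1 => hstep _ _ (trace_induction P h0 hstep es n)

def BakeryInv : ProcState × ProcState × ℕ × ℕ → Prop
  | (s1, s2, t1, t2) =>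
      (s1 = .U → s2 = .T ∨ t1 < t2) ∧ (s2 = .U → s1 = .T ∨ t2 < t1)

theorem bakeryInv_step3 (e : Event) {s : ProcState × ProcState × ℕ × ℕ} (h : BakeryInv s) :
    BakeryInv (step3 e s) := by
  obtain ⟨s1, s2, t1, t2⟩ := s
  cases e <;> simp only [step3] <;> split_ifs <;> simp_all [BakeryInv]

theorem BakeryInv.not_both_using {s : ProcState × ProcState × ℕ × ℕ} (h : BakeryInv s) :
    ¬(s.1 = .U ∧ s.2.1 = .U) := by
  obtain ⟨s1, s2, t1, t2⟩ := s
  rintro ⟨rfl, rfl⟩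
  obtain ⟨h1, h2⟩ := h
  exact lt_asymm ((h1 rfl).resolve_left nofun) ((h2 rfl).resolve_left nofun)

/-- Lamport's bakery algorithm (Example 3) satisfies mutual exclusion. -/
theorem bakery_mutual_exclusion :
    ∀ (es : ℕ → Event) (n : ℕ),
      ¬((trace step3 (ProcState.T, ProcState.T, 0, 0) es n).1 = ProcState.U ∧
        (trace step3 (ProcState.T, ProcState.T, 0, 0) es n).2.1 = ProcState.U) := by
  intro es n
  have h_init : BakeryInv (ProcState.T, ProcState.T, 0, 0) := ⟨nofun, nofun⟩
  exact (trace_induction BakeryInv h_init bakeryInv_step3 es n).not_both_using
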